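/- Fix an integer r ≥ 2 and reals 0 < γ₃ < γ₄ < γ₅ with B := γ₄ − γ₃ − log_r 2 > 0 and A := γ₅ − γ₄ + log_r 2. Every finite tree Γ in which every node has at most r^{γ₅} children has a subtree Γ′ (of the same height, with the restricted parent function) such that for every node Q of Γ′, the number of ancestors of Q in Γ′ having at least r^{γ₃} children in Γ′ is at least (height(Q)·B + log_r H_r^{γ₄}(Γ)) / (A + B). -/
import Mathlib


/-- A finite tree of height `N`, encoded as a finite set of words: a node of height `n` is a
list of length `n`, the root is `[]`, and the parent of a nonempty word is its tail. -/
def IsLTree (N : ℕ) (Γ : Finset (List ℕ)) : Prop :=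
  [] ∈ Γ ∧ (∀ w ∈ Γ, w.length ≤ N) ∧ (∀ w ∈ Γ, w ≠ [] → w.tail ∈ Γ) ∧
    (∀ w ∈ Γ, w.length < N → ∃ a : ℕ, a :: w ∈ Γ)

/-- The children of the node `w` in the tree `Γ`. -/
def children (Γ : Finset (List ℕ)) (w : List ℕ) : Finset (List ℕ) :=
  Γ.filter fun v => v ≠ [] ∧ v.tail = w

/-- A cut of the tree `Γ` of height `N`. -/
def IsCut (N : ℕ) (Γ C : Finset (List ℕ)) : Prop :=
  C ⊆ Γ ∧ ∀ w ∈ Γ, w.length = N → ∃ k : ℕ, w.drop k ∈ C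

/-- The Hausdorff content of the tree `Γ` of height `N` with base `r` at dimension `γ`. -/
noncomputable def treeContent (r : ℕ) (γ : ℝ) (N : ℕ) (Γ : Finset (List ℕ)) : ℝ :=
  sInf {x : ℝ | ∃ C : Finset (List ℕ), IsCut N Γ C ∧
    x = ∑ w ∈ C, (r : ℝ) ^ (-(w.length : ℝ) * γ)}

lemma tail_drop' (l : List ℕ) (k : ℕ) : l.tail.drop k = l.drop (k+1) := by
  rw [← List.drop_one, List.drop_drop, Nat.add_comm]

noncomputable def hfun (r : ℕ) (γ : ℝ) (Γ : Finset (List ℕ)) : ℕ → List ℕ → ℝ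
  | 0, w => (r : ℝ) ^ (-(w.length : ℝ) * γ)
  | (m+1), w => min ((r : ℝ) ^ (-(w.length : ℝ) * γ))
      (∑ c ∈ children Γ w, hfun r γ Γ m c)

noncomputable def Hh (r : ℕ) (γ : ℝ) (N : ℕ) (Γ : Finset (List ℕ)) (w : List ℕ) : ℝ :=
  hfun r γ Γ (N - w.length) w

lemma mem_children {Γ : Finset (List ℕ)} {w v : List ℕ} :
    v ∈ children Γ w ↔ v ∈ Γ ∧ v ≠ [] ∧ v.tail = w := by
  simp [children]

lemma children_length {Γ : Finset (List ℕ)} {w v : List ℕ} (h : v ∈ children Γ w) :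
    v.length = w.length + 1 := by
  rcases mem_children.1 h with ⟨-, hne, ht⟩
  cases v with
  | nil => exact absurd rfl hne
  | cons a t => simp at ht; simp [ht]

lemma Hh_eq_min {r : ℕ} {γ : ℝ} {N : ℕ} {Γ : Finset (List ℕ)} {w : List ℕ}
    (h : w.length < N) :
    Hh r γ N Γ w = min ((r : ℝ) ^ (-(w.length : ℝ) * γ))
      (∑ c ∈ children Γ w, Hh r γ N Γ c) := by
  have h1 : N - w.length = (N - w.length - 1) + 1 := by omega
  rw [Hh, h1, hfun]
  congr 1
  apply Finset.sum_congr rfl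
  intro c hc
  have := children_length hc
  rw [Hh]
  congr 1
  omega

lemma Hh_le {r : ℕ} {γ : ℝ} {N : ℕ} {Γ : Finset (List ℕ)} {w : List ℕ}
    (h : w.length ≤ N) :
    Hh r γ N Γ w ≤ (r : ℝ) ^ (-(w.length : ℝ) * γ) := by
  rcases lt_or_eq_of_le h with h | h
  · rw [Hh_eq_min h]; exact min_le_left _ _
  · rw [Hh]
    have : N - w.length = 0 := by omega
    rw [this, hfun]

lemma Hh_eq_leaf {r : ℕ} {γ : ℝ} {N : ℕ} {Γ : Finset (List ℕ)} {w : List ℕ}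
    (h : w.length = N) : Hh r γ N Γ w = (r : ℝ) ^ (-(w.length : ℝ) * γ) := by
  rw [Hh]
  have : N - w.length = 0 := by omega
  rw [this, hfun]

lemma children_nonempty {N : ℕ} {Γ : Finset (List ℕ)} (hΓ : IsLTree N Γ)
    {w : List ℕ} (hw : w ∈ Γ) (h : w.length < N) : (children Γ w).Nonempty := by
  obtain ⟨a, ha⟩ := hΓ.2.2.2 w hw h
  exact ⟨a :: w, mem_children.2 ⟨ha, by simp, by simp⟩⟩

lemma drop_mem {N : ℕ} {Γ : Finset (List ℕ)} (hΓ : IsLTree N Γ)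
    {w : List ℕ} (hw : w ∈ Γ) (k : ℕ) : w.drop k ∈ Γ := by
  induction k with
  | zero => simpa using hw
  | succ k ih =>
    rcases eq_or_ne (w.drop k) [] with h | h
    · have hk : w.length ≤ k := List.drop_eq_nil_iff.1 h
      have : w.drop (k+1) = [] := List.drop_eq_nil_iff.2 (by omega)
      rw [this]; exact hΓ.1
    · have := hΓ.2.2.1 _ ih h
      rwa [List.tail_drop] at this

lemma Hh_pos {r : ℕ} {γ : ℝ} {N : ℕ} {Γ : Finset (List ℕ)} (hΓ : IsLTree N Γ)
    (hr : 0 < r) : ∀ m : ℕ, ∀ w ∈ Γ, N - w.length = m → 0 < Hh r γ N Γ w := by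
  intro m
  induction m with
  | zero =>
    intro w hw hm
    rw [Hh, hm, hfun]
    positivity
  | succ m ih =>
    intro w hw hm
    have hwN : w.length < N := by omega
    rw [Hh_eq_min hwN]
    refine lt_min (by positivity) ?_
    refine Finset.sum_pos (fun c hc => ?_) (children_nonempty hΓ hw hwN)
    have hcl := children_length hc
    exact ih c (mem_children.1 hc).1 (by omega)

lemma sum_union_le_nonneg {f : List ℕ → ℝ} (hf : ∀ x, 0 ≤ f x) (A B : Finset (List ℕ)) :
    ∑ x ∈ A ∪ B, f x ≤ ∑ x ∈ A, f x + ∑ x ∈ B, f x := by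
  have h := Finset.sum_union_inter (s₁ := A) (s₂ := B) (f := f)
  have : 0 ≤ ∑ x ∈ A ∩ B, f x := Finset.sum_nonneg fun x _ => hf x
  linarith

lemma sum_biUnion_le_nonneg {f : List ℕ → ℝ} (hf : ∀ x, 0 ≤ f x)
    (s : Finset (List ℕ)) (t : List ℕ → Finset (List ℕ)) :
    ∑ x ∈ s.biUnion t, f x ≤ ∑ i ∈ s, ∑ x ∈ t i, f x := by
  induction s using Finset.cons_induction with
  | empty => simp
  | cons a s ha ih =>
    rw [Finset.cons_eq_insert, Finset.biUnion_insert, Finset.sum_insert ha]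
    exact le_trans (sum_union_le_nonneg hf _ _) (by linarith)

lemma cut_exists {r : ℕ} {γ : ℝ} {N : ℕ} {Γ : Finset (List ℕ)} (hΓ : IsLTree N Γ) :
    ∀ m : ℕ, ∀ w ∈ Γ, N - w.length = m →
    ∃ C : Finset (List ℕ), C ⊆ Γ ∧
      (∀ u ∈ Γ, u.length = N → u.drop (N - w.length) = w → ∃ k, u.drop k ∈ C) ∧
      ∑ v ∈ C, (r : ℝ) ^ (-(v.length : ℝ) * γ) ≤ Hh r γ N Γ w := by
  intro m
  induction m with
  | zero =>
    intro w hw hm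
    have hwN : w.length = N := by have := hΓ.2.1 w hw; omega
    refine ⟨{w}, by simpa using hw, fun u hu huN hud => ⟨N - w.length, by simpa [hud]⟩, ?_⟩
    rw [Finset.sum_singleton, Hh_eq_leaf hwN]
  | succ m ih =>
    intro w hw hm
    have hwN : w.length < N := by omega
    rcases le_or_gt ((r : ℝ) ^ (-(w.length : ℝ) * γ)) (∑ c ∈ children Γ w, Hh r γ N Γ c)
      with hle | hlt
    · refine ⟨{w}, by simpa using hw, fun u hu huN hud => ⟨N - w.length, by simpa [hud]⟩, ?_⟩
      rw [Finset.sum_singleton, Hh_eq_min hwN, min_eq_left hle]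
    · have hch : ∀ c ∈ children Γ w, ∃ C : Finset (List ℕ), C ⊆ Γ ∧
          (∀ u ∈ Γ, u.length = N → u.drop (N - c.length) = c → ∃ k, u.drop k ∈ C) ∧
          ∑ v ∈ C, (r : ℝ) ^ (-(v.length : ℝ) * γ) ≤ Hh r γ N Γ c := by
        intro c hc
        have := children_length hc
        exact ih c (mem_children.1 hc).1 (by omega)
      choose! g hg1 hg2 hg3 using hch
      refine ⟨(children Γ w).biUnion g, ?_, ?_, ?_⟩
      · intro v hv
        obtain ⟨c, hc, hvc⟩ := Finset.mem_biUnion.1 hv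
        exact hg1 c hc hvc
      · intro u hu huN hud
        set j := N - w.length - 1 with hj
        have hjlen : (u.drop j).length = w.length + 1 := by
          rw [List.length_drop]; omega
        have hcmem : u.drop j ∈ children Γ w := by
          refine mem_children.2 ⟨drop_mem hΓ hu j, ?_, ?_⟩
          · intro h; rw [h] at hjlen; simp at hjlen
          · rw [List.tail_drop]
            have : j + 1 = N - w.length := by omega
            rw [this, hud]
        obtain ⟨k, hk⟩ := hg2 (u.drop j) hcmem u hu huN (by rw [hjlen, show N - (w.length+1) = j from by omega])
        exact ⟨k, Finset.mem_biUnion.2 ⟨u.drop j, hcmem, hk⟩⟩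
      · refine le_trans (sum_biUnion_le_nonneg (fun x => by positivity) _ _) ?_
        rw [Hh_eq_min hwN, min_eq_right hlt.le]
        exact Finset.sum_le_sum fun c hc => hg3 c hc

noncomputable def Fset (r : ℕ) (γ : ℝ) (N : ℕ) (Γ : Finset (List ℕ)) (w : List ℕ) :
    Finset (List ℕ) :=
  (children Γ w).filter fun c =>
    (∑ c' ∈ children Γ w, Hh r γ N Γ c') / (2 * ((children Γ w).card : ℝ)) ≤ Hh r γ N Γ c

noncomputable def selF (r : ℕ) (γ₃ γ : ℝ) (N : ℕ) (Γ : Finset (List ℕ)) (w : List ℕ) :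
    Finset (List ℕ) :=
  if (r : ℝ) ^ γ₃ ≤ ((Fset r γ N Γ w).card : ℝ) then Fset r γ N Γ w
  else (Fset r γ N Γ w).filter fun c => ∀ c' ∈ Fset r γ N Γ w, Hh r γ N Γ c' ≤ Hh r γ N Γ c

lemma selF_subset {r : ℕ} {γ₃ γ : ℝ} {N : ℕ} {Γ : Finset (List ℕ)} {w : List ℕ} :
    selF r γ₃ γ N Γ w ⊆ children Γ w := by
  rw [selF]
  split
  · exact Finset.filter_subset _ _
  · exact (Finset.filter_subset _ _).trans (Finset.filter_subset _ _)

lemma Fset_sum_half {r : ℕ} {γ : ℝ} {N : ℕ} {Γ : Finset (List ℕ)} (hΓ : IsLTree N Γ)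
    (hr : 0 < r) {w : List ℕ} :
    (∑ c ∈ children Γ w, Hh r γ N Γ c) / 2 ≤ ∑ c ∈ Fset r γ N Γ w, Hh r γ N Γ c := by
  set S := ∑ c ∈ children Γ w, Hh r γ N Γ c with hS
  have hS0 : 0 ≤ S :=
    Finset.sum_nonneg fun c hc => (Hh_pos hΓ hr _ c (mem_children.1 hc).1 rfl).le
  set m := ((children Γ w).card : ℝ) with hm
  rcases Finset.eq_empty_or_nonempty (children Γ w) with he | hne
  · have hz : S = 0 := by rw [hS, he, Finset.sum_empty]
    simp [Fset, he, hz]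
  have hm0 : 0 < m := by
    rw [hm]; exact_mod_cast Finset.card_pos.2 hne
  have hsplit := Finset.sum_filter_add_sum_filter_not (children Γ w)
    (fun c => S / (2 * m) ≤ Hh r γ N Γ c) (Hh r γ N Γ)
  have hbound : ∑ c ∈ (children Γ w).filter
      (fun c => ¬ (S / (2 * m) ≤ Hh r γ N Γ c)), Hh r γ N Γ c ≤ S / 2 := by
    have h1 : ∀ c ∈ (children Γ w).filter
        (fun c => ¬ (S / (2 * m) ≤ Hh r γ N Γ c)), Hh r γ N Γ c ≤ S / (2 * m) :=
      fun c hc => (not_le.1 (Finset.mem_filter.1 hc).2).le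
    calc ∑ c ∈ (children Γ w).filter
          (fun c => ¬ (S / (2 * m) ≤ Hh r γ N Γ c)), Hh r γ N Γ c
        ≤ ((children Γ w).filter
            (fun c => ¬ (S / (2 * m) ≤ Hh r γ N Γ c))).card • (S / (2 * m)) :=
          Finset.sum_le_card_nsmul _ _ _ h1
      _ ≤ m * (S / (2 * m)) := by
          rw [nsmul_eq_mul]
          have hcard : (((children Γ w).filter
              (fun c => ¬ (S / (2 * m) ≤ Hh r γ N Γ c))).card : ℝ) ≤ m := by
            rw [hm]; exact_mod_cast Finset.card_filter_le _ _
          have h2 : 0 ≤ S / (2 * m) := by positivity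
          nlinarith
      _ = S / 2 := by field_simp
  have hFdef : Fset r γ N Γ w = (children Γ w).filter
      (fun c => S / (2 * m) ≤ Hh r γ N Γ c) := rfl
  rw [hFdef]
  linarith

lemma Fset_nonempty {r : ℕ} {γ : ℝ} {N : ℕ} {Γ : Finset (List ℕ)} (hΓ : IsLTree N Γ)
    (hr : 0 < r) {w : List ℕ} (hw : w ∈ Γ) (hwN : w.length < N) :
    (Fset r γ N Γ w).Nonempty := by
  have hS : 0 < ∑ c ∈ children Γ w, Hh r γ N Γ c :=
    Finset.sum_pos (fun c hc => Hh_pos hΓ hr _ c (mem_children.1 hc).1 rfl)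
      (children_nonempty hΓ hw hwN)
  rcases Finset.eq_empty_or_nonempty (Fset r γ N Γ w) with he | h
  · exfalso
    have h2 := Fset_sum_half (γ := γ) hΓ hr (w := w)
    rw [he, Finset.sum_empty] at h2
    linarith
  · exact h

lemma selF_nonempty {r : ℕ} {γ₃ γ : ℝ} {N : ℕ} {Γ : Finset (List ℕ)} (hΓ : IsLTree N Γ)
    (hr : 0 < r) {w : List ℕ} (hw : w ∈ Γ) (hwN : w.length < N) :
    (selF r γ₃ γ N Γ w).Nonempty := by
  have hF := Fset_nonempty (γ := γ) hΓ hr hw hwN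
  rw [selF]
  split
  · exact hF
  · obtain ⟨b, hb, hmax⟩ := Finset.exists_max_image (Fset r γ N Γ w) (Hh r γ N Γ) hF
    exact ⟨b, Finset.mem_filter.2 ⟨hb, hmax⟩⟩

lemma selF_bound {r : ℕ} {γ₃ γ γ₅ : ℝ} {N : ℕ} {Γ : Finset (List ℕ)} (hΓ : IsLTree N Γ)
    (hr : 0 < r) (hchild : ∀ w ∈ Γ, ((children Γ w).card : ℝ) ≤ (r : ℝ) ^ γ₅)
    {w c : List ℕ} (hw : w ∈ Γ) (hwN : w.length < N)
    (hc : c ∈ selF r γ₃ γ N Γ w) :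
    Hh r γ N Γ w * (if (r : ℝ) ^ γ₃ ≤ ((Fset r γ N Γ w).card : ℝ)
      then (2 * (r : ℝ) ^ γ₅)⁻¹ else (2 * (r : ℝ) ^ γ₃)⁻¹) ≤ Hh r γ N Γ c := by
  set S := ∑ c' ∈ children Γ w, Hh r γ N Γ c' with hSdef
  have hS : 0 < S :=
    Finset.sum_pos (fun c' hc' => Hh_pos hΓ hr _ c' (mem_children.1 hc').1 rfl)
      (children_nonempty hΓ hw hwN)
  have hHS : Hh r γ N Γ w ≤ S := by
    rw [Hh_eq_min hwN]; exact min_le_right _ _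
  have hm1 : (1 : ℝ) ≤ ((children Γ w).card : ℝ) := by
    exact_mod_cast Finset.card_pos.2 (children_nonempty hΓ hw hwN)
  have hmr : ((children Γ w).card : ℝ) ≤ (r : ℝ) ^ γ₅ := hchild w hw
  rw [selF] at hc
  split at hc <;> rename_i hfert
  · rw [if_pos hfert]
    have hcF : S / (2 * ((children Γ w).card : ℝ)) ≤ Hh r γ N Γ c :=
      (Finset.mem_filter.1 hc).2
    have : Hh r γ N Γ w / (2 * (r : ℝ) ^ γ₅) ≤ S / (2 * ((children Γ w).card : ℝ)) :=
      div_le_div₀ (le_of_lt hS) hHS (by linarith) (by linarith)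
    rw [div_eq_mul_inv] at this
    linarith
  · rw [if_neg hfert]
    obtain ⟨hcF, hmax⟩ := Finset.mem_filter.1 hc
    set K := ((Fset r γ N Γ w).card : ℝ) with hK
    have hK1 : (1 : ℝ) ≤ K := by
      rw [hK]; exact_mod_cast Finset.card_pos.2 ⟨c, hcF⟩
    have hKr : K < (r : ℝ) ^ γ₃ := not_le.1 hfert
    have hsum : ∑ c' ∈ Fset r γ N Γ w, Hh r γ N Γ c' ≤ K * Hh r γ N Γ c := by
      have := Finset.sum_le_card_nsmul (Fset r γ N Γ w) (Hh r γ N Γ) (Hh r γ N Γ c)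
        (fun c' hc' => hmax c' hc')
      rwa [nsmul_eq_mul] at this
    have hhalf : S / 2 ≤ K * Hh r γ N Γ c := le_trans (Fset_sum_half hΓ hr) hsum
    have hKc : S / (2 * K) ≤ Hh r γ N Γ c := by
      rw [div_le_iff₀ (by linarith)]
      nlinarith
    have : Hh r γ N Γ w / (2 * (r : ℝ) ^ γ₃) ≤ S / (2 * K) :=
      div_le_div₀ (le_of_lt hS) hHS (by linarith) (by linarith)
    rw [div_eq_mul_inv] at this
    linarith

lemma exists_leaf {N : ℕ} {Γ : Finset (List ℕ)} (hΓ : IsLTree N Γ) :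
    ∃ u ∈ Γ, u.length = N := by
  suffices h : ∀ m ≤ N, ∃ u ∈ Γ, u.length = m from h N le_rfl
  intro m
  induction m with
  | zero => exact fun _ => ⟨[], hΓ.1, rfl⟩
  | succ m ih =>
    intro hm
    obtain ⟨u, hu, hul⟩ := ih (by omega)
    obtain ⟨a, ha⟩ := hΓ.2.2.2 u hu (by omega)
    exact ⟨a :: u, ha, by simp [hul]⟩

lemma content_cut_le {r : ℕ} {γ : ℝ} {N : ℕ} {Γ C : Finset (List ℕ)}
    (hC : IsCut N Γ C) :
    treeContent r γ N Γ ≤ ∑ w ∈ C, (r : ℝ) ^ (-(w.length : ℝ) * γ) := by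
  apply csInf_le
  · refine ⟨0, fun x hx => ?_⟩
    obtain ⟨C', -, rfl⟩ := hx
    exact Finset.sum_nonneg fun w _ => by positivity
  · exact ⟨C, hC, rfl⟩

lemma content_pos {r : ℕ} {γ : ℝ} {N : ℕ} {Γ : Finset (List ℕ)} (hΓ : IsLTree N Γ)
    (hr : 2 ≤ r) (hγ : 0 < γ) : (r : ℝ) ^ (-(N : ℝ) * γ) ≤ treeContent r γ N Γ := by
  apply le_csInf
  · refine ⟨∑ w ∈ ({[]} : Finset (List ℕ)), (r : ℝ) ^ (-(w.length : ℝ) * γ), {[]},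
      ⟨by simpa using hΓ.1, fun w hw hwl => ⟨w.length, by simp⟩⟩, rfl⟩
  · rintro x ⟨C, hC, rfl⟩
    obtain ⟨u, hu, hul⟩ := exists_leaf hΓ
    obtain ⟨k, hk⟩ := hC.2 u hu hul
    have h1 : (1 : ℝ) ≤ (r : ℝ) := by exact_mod_cast le_trans (by norm_num) hr
    have hlen : ((u.drop k).length : ℝ) ≤ (N : ℝ) := Nat.cast_le.2 (hΓ.2.1 _ (hC.1 hk))
    have hexp : -(N : ℝ) * γ ≤ -(((u.drop k).length : ℝ)) * γ := by nlinarith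
    have h2 : (r : ℝ) ^ (-(N : ℝ) * γ) ≤ (r : ℝ) ^ (-(((u.drop k).length : ℝ)) * γ) :=
      Real.rpow_le_rpow_of_exponent_le h1 hexp
    have h3 : (r : ℝ) ^ (-(((u.drop k).length : ℝ)) * γ)
        ≤ ∑ w ∈ C, (r : ℝ) ^ (-(w.length : ℝ) * γ) :=
      Finset.single_le_sum (f := fun w : List ℕ => (r : ℝ) ^ (-(w.length : ℝ) * γ))
        (fun w _ => by positivity) hk
    linarith

/-- Regular subtree lemma: with `A = γ₅ - γ₄ + log_r 2` and `B = γ₄ - γ₃ - log_r 2 > 0`,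
every finite tree `Γ` of height `N` in which every node has at most `r^{γ₅}` children has a
subtree `Γ'` (of the same height) such that every node `Q` of `Γ'` has at least
`(height(Q)·B + log_r H_r^{γ₄}(Γ)) / (A+B)` ancestors with at least `r^{γ₃}` children in
`Γ'`. -/
theorem stmt9 (r : ℕ) (hr : 2 ≤ r) (γ₃ γ₄ γ₅ : ℝ)
    (h3 : 0 < γ₃) (h34 : γ₃ < γ₄) (h45 : γ₄ < γ₅)
    (hB : 0 < γ₄ - γ₃ - Real.log 2 / Real.log r)
    (N : ℕ) (Γ : Finset (List ℕ)) (hΓ : IsLTree N Γ)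
    (hchild : ∀ w ∈ Γ, ((children Γ w).card : ℝ) ≤ (r : ℝ) ^ γ₅) :
    ∃ Γ' : Finset (List ℕ), Γ' ⊆ Γ ∧ IsLTree N Γ' ∧
      ∀ Q ∈ Γ',
        ((Q.length : ℝ) * (γ₄ - γ₃ - Real.log 2 / Real.log r) +
            Real.log (treeContent r γ₄ N Γ) / Real.log r) /
          ((γ₅ - γ₄ + Real.log 2 / Real.log r) + (γ₄ - γ₃ - Real.log 2 / Real.log r)) ≤
        (({k : ℕ | 1 ≤ k ∧ k ≤ Q.length ∧
            (r : ℝ) ^ γ₃ ≤ ((children Γ' (Q.drop k)).card : ℝ)}).ncard : ℝ) := by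
  classical
  have hr0 : 0 < r := by omega
  have hr1 : (1 : ℝ) < (r : ℝ) := by exact_mod_cast hr.trans_lt' (by norm_num)
  have hrr0 : (0 : ℝ) < (r : ℝ) := by linarith
  set Γ' : Finset (List ℕ) := Γ.filter
    (fun Q => ∀ k < Q.length, Q.drop k ∈ selF r γ₃ γ₄ N Γ (Q.drop (k+1))) with hΓ'def
  have hmem : ∀ Q : List ℕ, Q ∈ Γ' ↔ Q ∈ Γ ∧
      ∀ k < Q.length, Q.drop k ∈ selF r γ₃ γ₄ N Γ (Q.drop (k+1)) := by
    intro Q; rw [hΓ'def, Finset.mem_filter]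
  have hsub : Γ' ⊆ Γ := Finset.filter_subset _ _
  have htree' : IsLTree N Γ' := by
    refine ⟨(hmem []).2 ⟨hΓ.1, by simp⟩, fun w hw => hΓ.2.1 w (hsub hw), ?_, ?_⟩
    · intro w hw hne
      obtain ⟨hwΓ, hcond⟩ := (hmem w).1 hw
      refine (hmem w.tail).2 ⟨hΓ.2.2.1 w hwΓ hne, ?_⟩
      intro k hk
      rw [tail_drop', tail_drop']
      have hlt : w.length ≠ 0 := by
        intro h; exact hne (List.eq_nil_of_length_eq_zero h)
      have hk' : k + 1 < w.length := by
        rw [List.length_tail] at hk; omega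
      exact hcond (k+1) hk'
    · intro w hw hwN
      obtain ⟨hwΓ, hcond⟩ := (hmem w).1 hw
      obtain ⟨c, hc⟩ := selF_nonempty (γ₃ := γ₃) (γ := γ₄) hΓ hr0 hwΓ hwN
      have hcch := selF_subset hc
      obtain ⟨hcΓ, hcne, hct⟩ := mem_children.1 hcch
      obtain ⟨a, t, rfl⟩ : ∃ a t, c = a :: t := by
        cases c with
        | nil => exact absurd rfl hcne
        | cons a t => exact ⟨a, t, rfl⟩
      simp only [List.tail_cons] at hct
      subst hct
      refine ⟨a, (hmem (a :: t)).2 ⟨hcΓ, ?_⟩⟩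
      intro k hk
      match k with
      | 0 => simpa using hc
      | (j+1) =>
        have e1 : (a :: t).drop (j+1) = t.drop j := by simp
        have e2 : (a :: t).drop (j+2) = t.drop (j+1) := by
          show (a :: t).drop (j+1+1) = _
          rw [List.drop_succ_cons]
        rw [e1, e2]
        have : j < t.length := by simp at hk; omega
        exact hcond j this
  -- children of interior nodes of Γ' are exactly the selected children
  have hchEq : ∀ Q ∈ Γ', ∀ k, 1 ≤ k → k ≤ Q.length →
      children Γ' (Q.drop k) = selF r γ₃ γ₄ N Γ (Q.drop k) := by
    intro Q hQ k hk1 hkn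
    obtain ⟨hQΓ, hQcond⟩ := (hmem Q).1 hQ
    ext c
    constructor
    · intro hcc
      obtain ⟨hcΓ', hcne, hct⟩ := mem_children.1 hcc
      obtain ⟨-, hccond⟩ := (hmem c).1 hcΓ'
      have hcl : c.length ≠ 0 := by
        intro h; exact hcne (List.eq_nil_of_length_eq_zero h)
      have h0 := hccond 0 (by omega)
      rw [List.drop_zero] at h0
      have e1 : c.drop 1 = Q.drop k := by rw [List.drop_one, hct]
      rwa [e1] at h0
    · intro hcc
      have hcch : c ∈ children Γ (Q.drop k) := selF_subset hcc
      obtain ⟨hcΓ, hcne, hct⟩ := mem_children.1 hcch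
      refine mem_children.2 ⟨(hmem c).2 ⟨hcΓ, ?_⟩, hcne, hct⟩
      intro j hj
      have hlen : c.length = (Q.drop k).length + 1 := children_length hcch
      rw [List.length_drop] at hlen
      match j with
      | 0 =>
        have e1 : c.drop 1 = Q.drop k := by rw [List.drop_one, hct]
        rw [List.drop_zero, e1]
        exact hcc
      | (i+1) =>
        have e1 : ∀ i' : ℕ, c.drop (i'+1) = Q.drop (k+i') := by
          intro i'
          rw [← tail_drop' c i', hct, List.drop_drop]
        rw [e1 i, show i+1+1 = (i+1)+1 from rfl, e1 (i+1),
          show k + (i+1) = (k+i) + 1 from by omega]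
        exact hQcond (k+i) (by omega)
  -- the per-step loss factor
  set step : List ℕ → ℝ := fun w => if (r : ℝ) ^ γ₃ ≤ ((Fset r γ₄ N Γ w).card : ℝ)
    then (2 * (r : ℝ) ^ γ₅)⁻¹ else (2 * (r : ℝ) ^ γ₃)⁻¹ with hstep
  have hstep_pos : ∀ w, 0 < step w := by
    intro w; rw [hstep]; dsimp only; split <;> positivity
  have key : ∀ Q ∈ Γ',
      Hh r γ₄ N Γ [] * ∏ k ∈ Finset.range Q.length, step (Q.drop (k+1))
        ≤ Hh r γ₄ N Γ Q := by
    intro Q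
    induction Q with
    | nil => intro _; simp
    | cons a t ih =>
      intro hQ
      have htmem : t ∈ Γ' := by
        have := htree'.2.2.1 (a :: t) hQ (by simp)
        simpa using this
      obtain ⟨hQΓ, hQcond⟩ := (hmem (a :: t)).1 hQ
      have hsel : (a :: t) ∈ selF r γ₃ γ₄ N Γ t := by
        have := hQcond 0 (by simp)
        simpa using this
      have htΓ : t ∈ Γ := hsub htmem
      have htN : t.length < N := by
        have := hΓ.2.1 (a :: t) hQΓ; simp at this; omega
      have hb := selF_bound (γ₃ := γ₃) (γ := γ₄) hΓ hr0 hchild htΓ htN hsel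
      have hb' : Hh r γ₄ N Γ t * step t ≤ Hh r γ₄ N Γ (a :: t) := by
        rw [hstep]; exact hb
      have ih' := ih htmem
      have hprod : ∏ k ∈ Finset.range (a :: t).length, step ((a :: t).drop (k+1))
          = (∏ k ∈ Finset.range t.length, step (t.drop (k+1))) * step t := by
        simp only [List.length_cons]
        rw [Finset.prod_range_succ' (fun k => step ((a :: t).drop (k+1)))]
        simp only [List.drop_succ_cons, List.drop_zero]
      rw [hprod, ← mul_assoc]
      calc Hh r γ₄ N Γ [] * (∏ k ∈ Finset.range t.length, step (t.drop (k+1))) * step t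
          ≤ Hh r γ₄ N Γ t * step t :=
            mul_le_mul_of_nonneg_right ih' (hstep_pos t).le
        _ ≤ Hh r γ₄ N Γ (a :: t) := hb'
  -- content bounds
  have hHc_le : treeContent r γ₄ N Γ ≤ Hh r γ₄ N Γ [] := by
    obtain ⟨C, hC1, hC2, hC3⟩ := cut_exists (r := r) (γ := γ₄) hΓ N [] hΓ.1 (by simp)
    have hcut : IsCut N Γ C := by
      refine ⟨hC1, fun w hw hwl => hC2 w hw hwl ?_⟩
      simp only [List.length_nil, Nat.sub_zero]
      rw [← hwl, List.drop_length]
    exact le_trans (content_cut_le hcut) hC3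
  have hHcpos : 0 < treeContent r γ₄ N Γ :=
    lt_of_lt_of_le (by positivity) (content_pos hΓ hr (by linarith))
  -- main estimate
  refine ⟨Γ', hsub, htree', ?_⟩
  intro Q hQ
  obtain ⟨hQΓ, hQcond⟩ := (hmem Q).1 hQ
  set n := Q.length with hn
  have hnN : n ≤ N := hΓ.2.1 Q hQΓ
  set T := (Finset.range n).filter
    (fun k => (r : ℝ) ^ γ₃ ≤ ((Fset r γ₄ N Γ (Q.drop (k+1))).card : ℝ)) with hT
  set f := T.card with hf
  have hfn : f ≤ n := le_trans (Finset.card_filter_le _ _) (by simp)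
  have hprodval : ∏ k ∈ Finset.range n, step (Q.drop (k+1))
      = ((2 * (r : ℝ) ^ γ₅)⁻¹) ^ f * ((2 * (r : ℝ) ^ γ₃)⁻¹) ^ (n - f) := by
    rw [hstep]
    dsimp only
    rw [Finset.prod_ite (fun _ => (2 * (r : ℝ) ^ γ₅)⁻¹) (fun _ => (2 * (r : ℝ) ^ γ₃)⁻¹),
      Finset.prod_const, Finset.prod_const]
    have htot := Finset.card_filter_add_card_filter_not (s := Finset.range n)
      (p := fun k => (r : ℝ) ^ γ₃ ≤ ((Fset r γ₄ N Γ (Q.drop (k+1))).card : ℝ))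
    rw [Finset.card_range] at htot
    have hc1 : ((Finset.range n).filter
        (fun k => (r : ℝ) ^ γ₃ ≤ ((Fset r γ₄ N Γ (Q.drop (k+1))).card : ℝ))).card = f := rfl
    have hc2 : ((Finset.range n).filter
        (fun k => ¬ (r : ℝ) ^ γ₃ ≤ ((Fset r γ₄ N Γ (Q.drop (k+1))).card : ℝ))).card = n - f := by
      omega
    rw [hc1, hc2]
  have hQle : Hh r γ₄ N Γ Q ≤ (r : ℝ) ^ (-(n : ℝ) * γ₄) := Hh_le hnN
  have hHpos0 : 0 < Hh r γ₄ N Γ [] := Hh_pos hΓ hr0 _ [] hΓ.1 rfl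
  set Hc := treeContent r γ₄ N Γ with hHcdef
  have hchain : Hc * (((2 * (r : ℝ) ^ γ₅)⁻¹) ^ f * ((2 * (r : ℝ) ^ γ₃)⁻¹) ^ (n - f))
      ≤ (r : ℝ) ^ (-(n : ℝ) * γ₄) := by
    have h1 := key Q hQ
    rw [← hn, hprodval] at h1
    have h2 : Hc * (((2 * (r : ℝ) ^ γ₅)⁻¹) ^ f * ((2 * (r : ℝ) ^ γ₃)⁻¹) ^ (n - f))
        ≤ Hh r γ₄ N Γ [] * (((2 * (r : ℝ) ^ γ₅)⁻¹) ^ f * ((2 * (r : ℝ) ^ γ₃)⁻¹) ^ (n - f)) :=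
      mul_le_mul_of_nonneg_right hHc_le (by positivity)
    exact le_trans (le_trans h2 h1) hQle
  have hLr : 0 < Real.log (r : ℝ) := Real.log_pos hr1
  have eA : Real.log ((2 * (r : ℝ) ^ γ₅)⁻¹) = -(Real.log 2 + γ₅ * Real.log (r : ℝ)) := by
    rw [Real.log_inv, Real.log_mul (by norm_num) (Real.rpow_pos_of_pos hrr0 γ₅).ne',
      Real.log_rpow hrr0]
  have eB : Real.log ((2 * (r : ℝ) ^ γ₃)⁻¹) = -(Real.log 2 + γ₃ * Real.log (r : ℝ)) := by
    rw [Real.log_inv, Real.log_mul (by norm_num) (Real.rpow_pos_of_pos hrr0 γ₃).ne',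
      Real.log_rpow hrr0]
  have hlog := Real.log_le_log (by positivity) hchain
  rw [Real.log_mul hHcpos.ne' (by positivity),
    Real.log_mul (by positivity) (by positivity),
    Real.log_pow, Real.log_pow, Real.log_rpow hrr0, eA, eB] at hlog
  have hcast : ((n - f : ℕ) : ℝ) = (n : ℝ) - (f : ℝ) := Nat.cast_sub hfn
  rw [hcast] at hlog
  set Lr := Real.log (r : ℝ) with hLrdef
  set L := Real.log 2 / Lr with hLdef
  have hLLr : L * Lr = Real.log 2 := div_mul_cancel₀ _ hLr.ne'
  have h2 : Real.log Hc / Lr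
      ≤ -(n : ℝ) * γ₄ + (f : ℝ) * (L + γ₅) + ((n : ℝ) - (f : ℝ)) * (L + γ₃) := by
    rw [div_le_iff₀ hLr]
    have hfL : (f : ℝ) * (L * Lr) = (f : ℝ) * Real.log 2 := by rw [hLLr]
    have hnL : (n : ℝ) * (L * Lr) = (n : ℝ) * Real.log 2 := by rw [hLLr]
    nlinarith [hlog]
  -- compare the fertile set with the stated ancestor set
  set s : Set ℕ := {k : ℕ | 1 ≤ k ∧ k ≤ n ∧
      (r : ℝ) ^ γ₃ ≤ ((children Γ' (Q.drop k)).card : ℝ)} with hsdef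
  have himg : ↑(T.image (fun k => k + 1)) ⊆ s := by
    intro x hx
    simp only [Finset.coe_image, Set.mem_image, Finset.mem_coe] at hx
    obtain ⟨k, hk, rfl⟩ := hx
    rw [hT, Finset.mem_filter, Finset.mem_range] at hk
    obtain ⟨hkn, hfert⟩ := hk
    refine ⟨by omega, by omega, ?_⟩
    rw [hchEq Q hQ (k+1) (by omega) (by omega), selF, if_pos hfert]
    exact hfert
  have hsfin : s.Finite :=
    Set.Finite.subset (Set.finite_Icc 1 n) (fun x hx => ⟨hx.1, hx.2.1⟩)
  have hcard : (f : ℝ) ≤ (s.ncard : ℝ) := by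
    have h1 : (T.image (fun k => k + 1)).card = f :=
      Finset.card_image_of_injective _ (fun a b h => by omega)
    have hle := Set.ncard_le_ncard himg hsfin
    rw [Set.ncard_coe_finset, h1] at hle
    exact_mod_cast hle
  have hD : 0 < (γ₅ - γ₄ + L) + (γ₄ - γ₃ - L) := by
    have : (γ₅ - γ₄ + L) + (γ₄ - γ₃ - L) = γ₅ - γ₃ := by ring
    rw [this]; linarith
  rw [div_le_iff₀ hD]
  have hmul : (f : ℝ) * (γ₅ - γ₃) ≤ (s.ncard : ℝ) * (γ₅ - γ₃) :=
    mul_le_mul_of_nonneg_right hcard (by linarith)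
  nlinarith [h2, hmul]
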